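/- arXiv:1003.0189 — 4 statements merged into one kernel-verified Lean document; each statement's English description precedes it below -/
import Mathlib

section
/- If a smooth curve γ(t) = (x(t), y(t), z(t)) in ℝ^{2p+1} satisfies the geodesic equations x'' + αy' = 0, y'' + αx' = 0, z' + Σᵢ xᵢyᵢ' = α with α = 0, then γ(t) = (x₀ + x₀'t, y₀ + y₀'t, z₀ − Σᵢ (xᵢ'(0)t/2 + xᵢ(0)) yᵢ'(0) t), where (x₀,y₀,z₀) = γ(0) and (x₀',y₀',z₀') = γ'(0). -/
private lemma deriv_const_of_second_zero (f : ℝ → ℝ) (hf : ContDiff ℝ (⊤ : ℕ∞) f)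
    (h : ∀ t, deriv (deriv f) t = 0) : ∀ t, deriv f t = deriv f 0 := by
  have hdf : Differentiable ℝ (deriv f) :=
    ((contDiff_infty_iff_deriv.mp (hf.of_le (by simp))).2).differentiable (by simp)
  intro t
  exact is_const_of_deriv_eq_zero hdf h t 0

private lemma linear_of_second_zero (f : ℝ → ℝ) (hf : ContDiff ℝ (⊤ : ℕ∞) f)
    (h : ∀ t, deriv (deriv f) t = 0) : ∀ t, f t = f 0 + deriv f 0 * t := by
  have hc := deriv_const_of_second_zero f hf h
  intro t
  set c := deriv f 0 with hcdef
  have hg : ∀ s, deriv (fun u => f u - c * u) s = 0 := by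
    intro s
    have h1 : HasDerivAt (fun u => f u - c * u) (deriv f s - c) s := by
      have := (hf.differentiable (by simp) s).hasDerivAt
      simpa using this.fun_sub ((hasDerivAt_id s).const_mul c)
    rw [h1.deriv, hc s]; ring
  have hdiff : Differentiable ℝ (fun u => f u - c * u) :=
    (hf.differentiable (by simp)).sub (differentiable_id.const_mul c)
  have := is_const_of_deriv_eq_zero hdiff hg t 0
  simp at this
  linarith

/-- Explicit form of the geodesics with `α = 0`. -/
theorem stmt_6 {p : ℕ} (x y : Fin p → ℝ → ℝ) (z : ℝ → ℝ)
    (hx : ∀ i, ContDiff ℝ (⊤ : ℕ∞) (x i)) (hy : ∀ i, ContDiff ℝ (⊤ : ℕ∞) (y i))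
    (hz : ContDiff ℝ (⊤ : ℕ∞) z)
    (α : ℝ) (hα0 : α = deriv z 0 + ∑ i, x i 0 * deriv (y i) 0)
    (hgx : ∀ i, ∀ t, deriv (deriv (x i)) t = -α * deriv (y i) t)
    (hgy : ∀ i, ∀ t, deriv (deriv (y i)) t = -α * deriv (x i) t)
    (hgz : ∀ t, deriv z t = α - ∑ i, x i t * deriv (y i) t)
    (hα : α = 0) :
    (∀ i t, x i t = x i 0 + deriv (x i) 0 * t) ∧
    (∀ i t, y i t = y i 0 + deriv (y i) 0 * t) ∧
    (∀ t, z t = z 0 - ∑ i, (deriv (x i) 0 * (t / 2) + x i 0) * deriv (y i) 0 * t) := by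
  subst hα
  have hxlin : ∀ i t, x i t = x i 0 + deriv (x i) 0 * t := fun i =>
    linear_of_second_zero (x i) (hx i) (by simpa using hgx i)
  have hylin : ∀ i t, y i t = y i 0 + deriv (y i) 0 * t := fun i =>
    linear_of_second_zero (y i) (hy i) (by simpa using hgy i)
  have hyc : ∀ i t, deriv (y i) t = deriv (y i) 0 := fun i =>
    deriv_const_of_second_zero (y i) (hy i) (by simpa using hgy i)
  refine ⟨hxlin, hylin, ?_⟩
  -- z' t = - ∑ (x i 0 + deriv (x i) 0 * t) * deriv (y i) 0
  have hz' : ∀ t, deriv z t = - ∑ i, (x i 0 + deriv (x i) 0 * t) * deriv (y i) 0 := by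
    intro t
    rw [hgz t]
    simp only [zero_sub]
    congr 1
    exact Finset.sum_congr rfl fun i _ => by rw [hxlin i t, hyc i t]
  -- candidate function
  set W : ℝ → ℝ := fun t => z t + ∑ i, (deriv (x i) 0 * (t / 2) + x i 0) * deriv (y i) 0 * t
    with hW
  have hWd : ∀ t, deriv W t = 0 := by
    intro t
    have h1 : HasDerivAt W (deriv z t + ∑ i, (x i 0 + deriv (x i) 0 * t) * deriv (y i) 0) t := by
      have hzd := (hz.differentiable (by simp) t).hasDerivAt
      have hsum : HasDerivAt (fun u => ∑ i, (deriv (x i) 0 * (u / 2) + x i 0) * deriv (y i) 0 * u)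
          (∑ i, (x i 0 + deriv (x i) 0 * t) * deriv (y i) 0) t := by
        apply HasDerivAt.fun_sum
        intro i _
        have : HasDerivAt (fun u => (deriv (x i) 0 * (u / 2) + x i 0) * deriv (y i) 0 * u)
            ((deriv (x i) 0 * (1 / 2) * deriv (y i) 0) * t
              + (deriv (x i) 0 * (t / 2) + x i 0) * deriv (y i) 0 * 1) t := by
          have ha : HasDerivAt (fun u => (deriv (x i) 0 * (u / 2) + x i 0) * deriv (y i) 0)
              (deriv (x i) 0 * (1 / 2) * deriv (y i) 0) t := by
            have : HasDerivAt (fun u : ℝ => deriv (x i) 0 * (u / 2) + x i 0)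
                (deriv (x i) 0 * (1 / 2)) t := by
              simpa using (((hasDerivAt_id t).div_const 2).const_mul (deriv (x i) 0)).add_const
                (x i 0)
            exact this.mul_const _
          exact ha.mul (hasDerivAt_id t)
        exact this.congr_deriv (by ring)
      exact hzd.add hsum
    rw [h1.deriv, hz' t]
    ring
  have hdiffW : Differentiable ℝ W := by
    intro t
    refine (hz.differentiable (by simp) t).add ?_
    apply Differentiable.differentiableAt
    apply Differentiable.fun_sum
    intro i _
    fun_prop
  intro t
  have := is_const_of_deriv_eq_zero hdiffW hWd t 0
  simp only [hW] at this
  simp at this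
  linarith [this]
end

section
/- The reduced geodesic system on H_{2p+1} has global solutions: for any initial data (x₀,y₀,z₀,x₀',y₀',z₀'), there exists a smooth curve γ : ℝ → ℝ^{2p+1} defined on all of ℝ satisfying x'' + αy' = 0, y'' + αx' = 0, z' + Σᵢ xᵢyᵢ' = α with α = z₀' + Σᵢ xᵢ(0)yᵢ'(0) and the given initial conditions (geodesic completeness). -/
/-- An auxiliary family of explicit analytic functions, closed under differentiation. -/
noncomputable def auxG (A B C D E F H α : ℝ) : ℝ → ℝ := fun t =>
  A + B * Real.sinh (α * t) + C * Real.cosh (α * t) + D * t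
    + E * Real.sinh (2 * (α * t)) + F * Real.cosh (2 * (α * t)) + H * t ^ 2

lemma auxG_hasDerivAt (A B C D E F H α t : ℝ) :
    HasDerivAt (auxG A B C D E F H α)
      (auxG D (α * C) (α * B) (2 * H) (2 * α * F) (2 * α * E) 0 α t) t := by
  have h1 : HasDerivAt (fun t : ℝ => α * t) α t := by
    simpa using (hasDerivAt_id t).const_mul α
  have h2 : HasDerivAt (fun t : ℝ => 2 * (α * t)) (2 * α) t := by
    simpa [mul_assoc] using (hasDerivAt_id t).const_mul (2 * α)
  have hs : HasDerivAt (fun t : ℝ => Real.sinh (α * t)) (Real.cosh (α * t) * α) t :=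
    (Real.hasDerivAt_sinh (α * t)).comp t h1
  have hc : HasDerivAt (fun t : ℝ => Real.cosh (α * t)) (Real.sinh (α * t) * α) t :=
    (Real.hasDerivAt_cosh (α * t)).comp t h1
  have hs2 : HasDerivAt (fun t : ℝ => Real.sinh (2 * (α * t)))
      (Real.cosh (2 * (α * t)) * (2 * α)) t :=
    by have := (Real.hasDerivAt_sinh (2 * (α * t))).comp t h2; exact this
  have hc2 : HasDerivAt (fun t : ℝ => Real.cosh (2 * (α * t)))
      (Real.sinh (2 * (α * t)) * (2 * α)) t :=
    by have := (Real.hasDerivAt_cosh (2 * (α * t))).comp t h2; exact this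
  have hid : HasDerivAt (fun t : ℝ => D * t) D t := by
    simpa using (hasDerivAt_id t).const_mul D
  have hsq : HasDerivAt (fun t : ℝ => H * t ^ 2) (H * (2 * t)) t := by
    simpa using (hasDerivAt_pow 2 t).const_mul H
  have total := ((((((hasDerivAt_const t A).add (hs.const_mul B)).add
      (hc.const_mul C)).add hid).add (hs2.const_mul E)).add (hc2.const_mul F)).add hsq
  convert total using 1
  · rfl
  · rfl
  · funext y; simp only [auxG, Pi.add_apply]
  simp only [auxG]
  ring

lemma auxG_deriv (A B C D E F H α : ℝ) :
    deriv (auxG A B C D E F H α)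
      = auxG D (α * C) (α * B) (2 * H) (2 * α * F) (2 * α * E) 0 α :=
  funext fun t => (auxG_hasDerivAt A B C D E F H α t).deriv

lemma auxG_contDiff (A B C D E F H α : ℝ) : ContDiff ℝ (⊤ : ℕ∞) (auxG A B C D E F H α) := by
  unfold auxG
  have hl : ContDiff ℝ (⊤ : ℕ∞) (fun t : ℝ => α * t) := contDiff_const.mul contDiff_id
  have hl2 : ContDiff ℝ (⊤ : ℕ∞) (fun t : ℝ => 2 * (α * t)) := contDiff_const.mul hl
  exact ((((((contDiff_const.add
      (contDiff_const.mul (Real.contDiff_sinh.comp hl))).add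
      (contDiff_const.mul (Real.contDiff_cosh.comp hl))).add
      (contDiff_const.mul contDiff_id)).add
      (contDiff_const.mul (Real.contDiff_sinh.comp hl2))).add
      (contDiff_const.mul (Real.contDiff_cosh.comp hl2))).add
      (contDiff_const.mul (contDiff_id.pow 2)))

lemma auxG_zero (A B C D E F H α : ℝ) : auxG A B C D E F H α 0 = A + C + F := by
  simp [auxG]

/-- Geodesic completeness: the reduced geodesic system on `H_{2p+1}` has global smooth
solutions for any initial data. -/
theorem stmt_10 {p : ℕ} (x₀ y₀ x₀' y₀' : Fin p → ℝ) (z₀ z₀' : ℝ) :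
    ∃ (x y : Fin p → ℝ → ℝ) (z : ℝ → ℝ),
      (∀ i, ContDiff ℝ (⊤ : ℕ∞) (x i)) ∧ (∀ i, ContDiff ℝ (⊤ : ℕ∞) (y i)) ∧ ContDiff ℝ (⊤ : ℕ∞) z ∧
      (∀ i, x i 0 = x₀ i) ∧ (∀ i, y i 0 = y₀ i) ∧ z 0 = z₀ ∧
      (∀ i, deriv (x i) 0 = x₀' i) ∧ (∀ i, deriv (y i) 0 = y₀' i) ∧ deriv z 0 = z₀' ∧
      (∀ i t, deriv (deriv (x i)) t
        + (z₀' + ∑ j, x₀ j * y₀' j) * deriv (y i) t = 0) ∧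
      (∀ i t, deriv (deriv (y i)) t
        + (z₀' + ∑ j, x₀ j * y₀' j) * deriv (x i) t = 0) ∧
      (∀ t, deriv z t + ∑ i, x i t * deriv (y i) t = z₀' + ∑ j, x₀ j * y₀' j) := by
  set α : ℝ := z₀' + ∑ j, x₀ j * y₀' j with hα
  by_cases hα0 : α = 0
  · -- degenerate case: straight lines
    refine ⟨fun i => auxG (x₀ i) 0 0 (x₀' i) 0 0 0 0,
      fun i => auxG (y₀ i) 0 0 (y₀' i) 0 0 0 0,
      auxG z₀ 0 0 z₀' 0 0 (-(∑ j, x₀' j * y₀' j) / 2) 0, ?_, ?_, ?_, ?_, ?_, ?_, ?_, ?_, ?_, ?_, ?_, ?_⟩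
    · exact fun i => auxG_contDiff _ _ _ _ _ _ _ _
    · exact fun i => auxG_contDiff _ _ _ _ _ _ _ _
    · exact auxG_contDiff _ _ _ _ _ _ _ _
    · intro i; simp [auxG_zero]
    · intro i; simp [auxG_zero]
    · simp [auxG_zero]
    · intro i; rw [auxG_deriv]; simp [auxG]
    · intro i; rw [auxG_deriv]; simp [auxG]
    · rw [auxG_deriv]; simp [auxG]
    · intro i t; rw [auxG_deriv, auxG_deriv, hα0]; simp [auxG]
    · intro i t; rw [auxG_deriv, auxG_deriv, hα0]; simp [auxG]
    · intro t
      simp only [auxG_deriv]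
      simp only [auxG, Real.sinh_zero, Real.cosh_zero, zero_mul, mul_zero, mul_one,
        zero_add, add_zero, one_mul]
      have h1 : ∑ i, (x₀ i + x₀' i * t) * y₀' i
          = ∑ i, x₀ i * y₀' i + (∑ i, x₀' i * y₀' i) * t := by
        rw [Finset.sum_mul, ← Finset.sum_add_distrib]
        exact Finset.sum_congr rfl fun i _ => by ring
      rw [h1, hα]
      ring
  · -- main case: hyperbolic solutions
    set P : ℝ := ∑ i, (x₀ i + y₀' i / α) * x₀' i with hP
    set Q : ℝ := ∑ i, (x₀ i + y₀' i / α) * y₀' i with hQ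
    set K1 : ℝ := ∑ i, (y₀' i ^ 2 - x₀' i ^ 2) / 2 with hK1
    set K2 : ℝ := ∑ i, (y₀' i ^ 2 + x₀' i ^ 2) / 2 with hK2
    set K3 : ℝ := ∑ i, x₀' i * y₀' i with hK3
    set x : Fin p → ℝ → ℝ := fun i =>
      auxG (x₀ i + y₀' i / α) (x₀' i / α) (-(y₀' i / α)) 0 0 0 0 α with hx
    set y : Fin p → ℝ → ℝ := fun i =>
      auxG (y₀ i + x₀' i / α) (y₀' i / α) (-(x₀' i / α)) 0 0 0 0 α with hy
    set z : ℝ → ℝ :=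
      auxG (z₀ - P / α + K3 / (2 * α ^ 2)) (-Q / α) (P / α) (α + K1 / α)
        (K2 / (2 * α ^ 2)) (-K3 / (2 * α ^ 2)) 0 α with hz
    have hx0 : ∀ i, x i 0 = x₀ i := by
      intro i; simp only [hx, auxG_zero]; ring
    have hy0 : ∀ i, y i 0 = y₀ i := by
      intro i; simp only [hy, auxG_zero]; ring
    have hdx0 : ∀ i, deriv (x i) 0 = x₀' i := by
      intro i; simp only [hx, auxG_deriv, auxG_zero]; field_simp; ring
    have hdy0 : ∀ i, deriv (y i) 0 = y₀' i := by
      intro i; simp only [hy, auxG_deriv, auxG_zero]; field_simp; ring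
    have key : ∀ t, deriv z t + ∑ i, x i t * deriv (y i) t = α := by
      intro t
      simp only [hz, hx, hy, auxG_deriv, auxG]
      rw [Real.sinh_two_mul (α * t), Real.cosh_two_mul (α * t)]
      set S := Real.sinh (α * t) with hS
      set C := Real.cosh (α * t) with hC
      have hC2 : C ^ 2 = S ^ 2 + 1 := Real.cosh_sq _
      have hsq : ∑ i, (y₀' i * C - x₀' i * S) ^ 2
          = K1 + K2 * (C ^ 2 + S ^ 2) - K3 * (2 * S * C) := by
        rw [hK1, hK2, hK3, Finset.sum_mul, Finset.sum_mul, ← Finset.sum_add_distrib,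
          ← Finset.sum_sub_distrib]
        refine Finset.sum_congr rfl fun j _ => ?_
        linear_combination ((y₀' j ^ 2 - x₀' j ^ 2) / 2) * hC2
      have hsum : (∑ i, (x₀ i + y₀' i / α + x₀' i / α * S + -(y₀' i / α) * C + 0 * t
            + 0 * (2 * S * C) + 0 * (C ^ 2 + S ^ 2) + 0 * t ^ 2)
            * (0 + α * -(x₀' i / α) * S + α * (y₀' i / α) * C + 2 * 0 * t
            + 2 * α * 0 * (2 * S * C) + 2 * α * 0 * (C ^ 2 + S ^ 2) + 0 * t ^ 2))
          = (∑ i, (x₀ i + y₀' i / α) * y₀' i) * C - (∑ i, (x₀ i + y₀' i / α) * x₀' i) * S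
            - (∑ i, (y₀' i * C - x₀' i * S) ^ 2) / α := by
        rw [Finset.sum_mul, Finset.sum_mul, Finset.sum_div, ← Finset.sum_sub_distrib,
          ← Finset.sum_sub_distrib]
        refine Finset.sum_congr rfl fun j _ => ?_
        field_simp
        ring
      rw [hsum, hsq, ← hP, ← hQ]
      field_simp
      ring
    refine ⟨x, y, z, fun i => auxG_contDiff _ _ _ _ _ _ _ _,
      fun i => auxG_contDiff _ _ _ _ _ _ _ _, auxG_contDiff _ _ _ _ _ _ _ _,
      hx0, hy0, ?_, hdx0, hdy0, ?_, ?_, ?_, key⟩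
    · rw [hz, auxG_zero]; ring
    · have h0 := key 0
      have hsum : ∑ i, x i 0 * deriv (y i) 0 = ∑ j, x₀ j * y₀' j :=
        Finset.sum_congr rfl fun i _ => by rw [hx0 i, hdy0 i]
      rw [hsum] at h0
      rw [hα] at h0
      linarith
    · intro i t
      simp only [hx, hy, auxG_deriv, auxG]
      field_simp
      ring
    · intro i t
      simp only [hx, hy, auxG_deriv, auxG]
      field_simp
      ring
end

section
/- If γ = (x,y,z) solves the geodesic system (x'' = −αy', y'' = −αx', z' = α − Σᵢ xᵢyᵢ', with α = z'(0) + Σᵢ xᵢ(0)yᵢ'(0)) and θ(γ'(0)) = 0 where θ = Σᵢ (dxᵢ − dyᵢ), then θ(γ'(t)) = 0 for all t ∈ ℝ. In other words, if Σᵢ(xᵢ'(0) − yᵢ'(0)) = 0 then Σᵢ(xᵢ'(t) − yᵢ'(t)) = 0 for all t. -/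
/-- If a geodesic of `H_{2p+1}` satisfies `θ(γ'(0)) = 0` where `θ = Σᵢ(dxᵢ − dyᵢ)`,
then `θ(γ'(t)) = 0` for all `t`: the kernel of `θ` is a totally geodesic distribution. -/
theorem stmt_13 {p : ℕ} (x y : Fin p → ℝ → ℝ) (z : ℝ → ℝ)
    (hx : ∀ i, ContDiff ℝ (⊤ : ℕ∞) (x i)) (hy : ∀ i, ContDiff ℝ (⊤ : ℕ∞) (y i))
    (hz : ContDiff ℝ (⊤ : ℕ∞) z)
    (α : ℝ) (hαdef : α = deriv z 0 + ∑ i, x i 0 * deriv (y i) 0)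
    (hgx : ∀ i, ∀ t, deriv (deriv (x i)) t = -α * deriv (y i) t)
    (hgy : ∀ i, ∀ t, deriv (deriv (y i)) t = -α * deriv (x i) t)
    (hgz : ∀ t, deriv z t = α - ∑ i, x i t * deriv (y i) t)
    (h0 : ∑ i, (deriv (x i) 0 - deriv (y i) 0) = 0) :
    ∀ t, ∑ i, (deriv (x i) t - deriv (y i) t) = 0 := by
  set f : ℝ → ℝ := fun t => ∑ i, (deriv (x i) t - deriv (y i) t) with hf
  have hdx : ∀ i, Differentiable ℝ (deriv (x i)) := fun i =>
    ((contDiff_infty_iff_deriv.mp ((hx i).of_le (by simp))).2).differentiable (by norm_num)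
  have hdy : ∀ i, Differentiable ℝ (deriv (y i)) := fun i =>
    ((contDiff_infty_iff_deriv.mp ((hy i).of_le (by simp))).2).differentiable (by norm_num)
  have hfd : ∀ t, HasDerivAt f (α * f t) t := by
    intro t
    have h : HasDerivAt f (∑ i, (deriv (deriv (x i)) t - deriv (deriv (y i)) t)) t :=
      HasDerivAt.fun_sum fun i _ =>
        ((hdx i t).hasDerivAt).sub ((hdy i t).hasDerivAt)
    convert h using 1
    simp only [hgx, hgy, hf]
    rw [Finset.mul_sum]
    congr 1; ext i; ring
  have hg : ∀ t, HasDerivAt (fun t => Real.exp (-α * t) * f t) 0 t := by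
    intro t
    have he : HasDerivAt (fun t => Real.exp (-α * t)) (-α * Real.exp (-α * t)) t := by
      have := ((hasDerivAt_id t).const_mul (-α)).exp
      convert this using 1
      simp; unfold id; ring
    have := he.fun_mul (hfd t)
    refine this.congr_deriv ?_
    ring
  have hconst : ∀ t, Real.exp (-α * t) * f t = Real.exp (-α * 0) * f 0 := by
    intro t
    exact is_const_of_deriv_eq_zero (fun s => (hg s).differentiableAt)
      (fun s => (hg s).deriv) t 0
  intro t
  have := hconst t
  have h0' : f 0 = 0 := h0
  rw [h0', mul_zero] at this
  have := mul_eq_zero.mp this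
  simp [Real.exp_ne_zero] at this
  exact this
end

section
/- If α ≠ 0 and (x,y,z) solves the reduced geodesic system, then z(t) is given by the explicit formula: z(t) = (1/α²)Σᵢ(αxᵢ(0)+yᵢ'(0))(xᵢ'(0)cosh(αt) − yᵢ'(0)sinh(αt)) − (1/(2α²))Σᵢ xᵢ'(0)yᵢ'(0)cosh(2αt) + (1/(4α²))Σᵢ[(xᵢ'(0))² + (yᵢ'(0))²]sinh(2αt) + (α − (1/(2α))Σᵢ[(xᵢ'(0))² − (yᵢ'(0))²])t + z₀ − (1/(2α²))Σᵢ xᵢ'(0)(2αxᵢ(0) + yᵢ'(0)). -/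
private lemma hda_cosh (β t : ℝ) :
    HasDerivAt (fun s => Real.cosh (β * s)) (β * Real.sinh (β * t)) t := by
  have h := (Real.hasDerivAt_cosh (β * t)).comp t ((hasDerivAt_id t).const_mul β)
  simpa [mul_comm, Function.comp_def] using h

private lemma hda_sinh (β t : ℝ) :
    HasDerivAt (fun s => Real.sinh (β * s)) (β * Real.cosh (β * t)) t := by
  have h := (Real.hasDerivAt_sinh (β * t)).comp t ((hasDerivAt_id t).const_mul β)
  simpa [mul_comm, Function.comp_def] using h

private lemma const_of_deriv0 {f : ℝ → ℝ} (hf : ∀ t, HasDerivAt f 0 t) (t : ℝ) :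
    f t = f 0 :=
  is_const_of_deriv_eq_zero (fun s => (hf s).differentiableAt)
    (fun s => (hf s).deriv) t 0

/-- Solution of the linear system u' = -α v, v' = -α u. -/
private lemma uv_formula (α : ℝ) (u v : ℝ → ℝ)
    (hu : ∀ t, HasDerivAt u (-α * v t) t) (hv : ∀ t, HasDerivAt v (-α * u t) t) :
    ∀ t, u t = u 0 * Real.cosh (α * t) - v 0 * Real.sinh (α * t) := by
  have hP : ∀ t, u t * Real.cosh (α * t) + v t * Real.sinh (α * t) = u 0 := by
    intro t
    have key : ∀ s, HasDerivAt
        (fun r => u r * Real.cosh (α * r) + v r * Real.sinh (α * r)) 0 s := by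
      intro s
      have h := ((hu s).mul (hda_cosh α s)).add ((hv s).mul (hda_sinh α s))
      refine h.congr_deriv ?_
      ring
    have h0 := const_of_deriv0 key t
    simpa using h0
  have hQ : ∀ t, u t * Real.sinh (α * t) + v t * Real.cosh (α * t) = v 0 := by
    intro t
    have key : ∀ s, HasDerivAt
        (fun r => u r * Real.sinh (α * r) + v r * Real.cosh (α * r)) 0 s := by
      intro s
      have h := ((hu s).mul (hda_sinh α s)).add ((hv s).mul (hda_cosh α s))
      refine h.congr_deriv ?_
      ring
    have h0 := const_of_deriv0 key t
    simpa using h0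
  intro t
  have pyth := Real.cosh_sq_sub_sinh_sq (α * t)
  linear_combination Real.cosh (α * t) * hP t - Real.sinh (α * t) * hQ t - u t * pyth

private lemma sum_lin {n : ℕ} (f g : Fin n → ℝ) (u v : ℝ) :
    ∑ i, (f i * u + g i * v) = (∑ i, f i) * u + (∑ i, g i) * v := by
  rw [Finset.sum_add_distrib, Finset.sum_mul, Finset.sum_mul]

private lemma sum_lin5 {n : ℕ} (f1 f2 f3 f4 f5 : Fin n → ℝ) (u1 u2 u3 u4 u5 : ℝ) :
    ∑ i, (f1 i * u1 + f2 i * u2 + f3 i * u3 + f4 i * u4 + f5 i * u5) =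
      (∑ i, f1 i) * u1 + (∑ i, f2 i) * u2 + (∑ i, f3 i) * u3
        + (∑ i, f4 i) * u4 + (∑ i, f5 i) * u5 := by
  simp [Finset.sum_add_distrib, Finset.sum_mul]

/-- Recover `z` from its derivative expressed in hyperbolic functions. -/
private lemma z_formula (α : ℝ) (z : ℝ → ℝ) (hz : Differentiable ℝ z) (A B C D E : ℝ)
    (hder : ∀ t, deriv z t = A * (α * Real.sinh (α * t)) + B * (α * Real.cosh (α * t))
        + C * (2 * α * Real.sinh (2 * α * t)) + D * (2 * α * Real.cosh (2 * α * t)) + E) :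
    ∀ t, z t = A * Real.cosh (α * t) + B * Real.sinh (α * t) + C * Real.cosh (2 * α * t)
        + D * Real.sinh (2 * α * t) + E * t + (z 0 - A - C) := by
  intro t
  have key : ∀ s, HasDerivAt (fun r => z r -
      (A * Real.cosh (α * r) + B * Real.sinh (α * r) + C * Real.cosh (2 * α * r)
        + D * Real.sinh (2 * α * r) + E * r)) 0 s := by
    intro s
    have h1 : HasDerivAt z (A * (α * Real.sinh (α * s)) + B * (α * Real.cosh (α * s))
        + C * (2 * α * Real.sinh (2 * α * s)) + D * (2 * α * Real.cosh (2 * α * s)) + E) s := by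
      have := (hz s).hasDerivAt
      rwa [hder s] at this
    have h2 := (((((hda_cosh α s).const_mul A).add ((hda_sinh α s).const_mul B)).add
        ((hda_cosh (2 * α) s).const_mul C)).add ((hda_sinh (2 * α) s).const_mul D)).add
        ((hasDerivAt_id s).const_mul E)
    have h3 := h1.sub h2
    refine h3.congr_deriv ?_
    ring
  have h0 := const_of_deriv0 key t
  simp only [Real.cosh_zero, Real.sinh_zero, mul_zero, mul_one] at h0
  linarith

/-- Explicit formula for the `z`-component of a geodesic with `α ≠ 0`. -/
theorem stmt_19 {p : ℕ} (α : ℝ) (hα : α ≠ 0) (x y : Fin p → ℝ → ℝ) (z : ℝ → ℝ)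
    (hx : ∀ i, ContDiff ℝ (⊤ : ℕ∞) (x i)) (hy : ∀ i, ContDiff ℝ (⊤ : ℕ∞) (y i))
    (hz : ContDiff ℝ (⊤ : ℕ∞) z)
    (hgx : ∀ i, ∀ t, deriv (deriv (x i)) t = -α * deriv (y i) t)
    (hgy : ∀ i, ∀ t, deriv (deriv (y i)) t = -α * deriv (x i) t)
    (hgz : ∀ t, deriv z t = α - ∑ i, x i t * deriv (y i) t) :
    ∀ t, z t =
      (1 / α ^ 2) * ∑ i, (α * x i 0 + deriv (y i) 0)
          * (deriv (x i) 0 * Real.cosh (α * t) - deriv (y i) 0 * Real.sinh (α * t))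
      - (1 / (2 * α ^ 2)) * ∑ i, deriv (x i) 0 * deriv (y i) 0 * Real.cosh (2 * α * t)
      + (1 / (4 * α ^ 2)) * (∑ i, ((deriv (x i) 0) ^ 2 + (deriv (y i) 0) ^ 2))
          * Real.sinh (2 * α * t)
      + (α - (1 / (2 * α)) * ∑ i, ((deriv (x i) 0) ^ 2 - (deriv (y i) 0) ^ 2)) * t
      + z 0
      - (1 / (2 * α ^ 2)) * ∑ i, deriv (x i) 0 * (2 * α * x i 0 + deriv (y i) 0) := by
  -- abbreviations
  set a : Fin p → ℝ := fun i => deriv (x i) 0 with ha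
  set b : Fin p → ℝ := fun i => deriv (y i) 0 with hb
  set c : Fin p → ℝ := fun i => x i 0 with hc
  -- differentiability
  have hdx : ∀ i, Differentiable ℝ (x i) := fun i => (hx i).differentiable (by simp)
  have hdx' : ∀ i, Differentiable ℝ (deriv (x i)) := fun i =>
    (contDiff_infty_iff_deriv.mp ((hx i).of_le (by simp))).2.differentiable (by simp)
  have hdy' : ∀ i, Differentiable ℝ (deriv (y i)) := fun i =>
    (contDiff_infty_iff_deriv.mp ((hy i).of_le (by simp))).2.differentiable (by simp)
  have hdz : Differentiable ℝ z := hz.differentiable (by simp)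
  -- solve for the derivatives of x and y
  have hu : ∀ i, ∀ t, HasDerivAt (deriv (x i)) (-α * deriv (y i) t) t := by
    intro i t
    have := (hdx' i t).hasDerivAt
    rwa [hgx i t] at this
  have hv : ∀ i, ∀ t, HasDerivAt (deriv (y i)) (-α * deriv (x i) t) t := by
    intro i t
    have := (hdy' i t).hasDerivAt
    rwa [hgy i t] at this
  have hxd : ∀ i, ∀ t, deriv (x i) t = a i * Real.cosh (α * t) - b i * Real.sinh (α * t) :=
    fun i => uv_formula α _ _ (hu i) (hv i)
  have hyd : ∀ i, ∀ t, deriv (y i) t = b i * Real.cosh (α * t) - a i * Real.sinh (α * t) :=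
    fun i => uv_formula α _ _ (hv i) (hu i)
  -- integrate to get x
  have hxf : ∀ i, ∀ t, x i t = c i + (a i / α) * Real.sinh (α * t)
      - (b i / α) * Real.cosh (α * t) + b i / α := by
    intro i t
    have key : ∀ s, HasDerivAt (fun r => x i r -
        ((a i / α) * Real.sinh (α * r) - (b i / α) * Real.cosh (α * r))) 0 s := by
      intro s
      have h1 : HasDerivAt (x i) (a i * Real.cosh (α * s) - b i * Real.sinh (α * s)) s := by
        have := (hdx i s).hasDerivAt
        rwa [hxd i s] at this
      have h2 := ((hda_sinh α s).const_mul (a i / α)).sub ((hda_cosh α s).const_mul (b i / α))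
      have h3 := h1.sub h2
      refine h3.congr_deriv ?_
      field_simp
      ring
    have h0 := const_of_deriv0 key t
    simp only [Real.cosh_zero, Real.sinh_zero, mul_zero, mul_one] at h0
    linarith
  -- atoms
  set sca : ℝ := ∑ i, c i * a i with hsca
  set scb : ℝ := ∑ i, c i * b i with hscb
  set sab : ℝ := ∑ i, a i * b i with hsab
  set saa : ℝ := ∑ i, a i ^ 2 with hsaa
  set sbb : ℝ := ∑ i, b i ^ 2 with hsbb
  -- per-summand expansion of x * y'
  have hxy : ∀ i, ∀ t, x i t * deriv (y i) t =
      (c i * b i) * Real.cosh (α * t) + (c i * a i) * (-Real.sinh (α * t))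
      + (b i ^ 2) * ((Real.cosh (α * t) - Real.cosh (α * t) ^ 2) / α)
      + (a i * b i) * ((2 * Real.sinh (α * t) * Real.cosh (α * t) - Real.sinh (α * t)) / α)
      + (a i ^ 2) * ((1 - Real.cosh (α * t) ^ 2) / α) := by
    intro i t
    have pyth := Real.cosh_sq_sub_sinh_sq (α * t)
    rw [hxf i t, hyd i t]
    field_simp
    linear_combination (a i ^ 2) * pyth
  have hsum : ∀ t, ∑ i, x i t * deriv (y i) t =
      scb * Real.cosh (α * t) + sca * (-Real.sinh (α * t))
      + sbb * ((Real.cosh (α * t) - Real.cosh (α * t) ^ 2) / α)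
      + sab * ((2 * Real.sinh (α * t) * Real.cosh (α * t) - Real.sinh (α * t)) / α)
      + saa * ((1 - Real.cosh (α * t) ^ 2) / α) := by
    intro t
    rw [Finset.sum_congr rfl fun i _ => hxy i t]
    exact sum_lin5 _ _ _ _ _ _ _ _ _ _
  -- double-angle rewrites
  have hC2 : ∀ t : ℝ, Real.cosh (2 * α * t) = 2 * Real.cosh (α * t) ^ 2 - 1 := by
    intro t
    rw [mul_assoc, Real.cosh_two_mul]
    have := Real.cosh_sq_sub_sinh_sq (α * t)
    linarith
  have hS2 : ∀ t : ℝ, Real.sinh (2 * α * t) = 2 * Real.sinh (α * t) * Real.cosh (α * t) := by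
    intro t
    rw [mul_assoc, Real.sinh_two_mul]
  -- apply the integration lemma for z
  have hder : ∀ t, deriv z t =
      ((α * sca + sab) / α ^ 2) * (α * Real.sinh (α * t))
      + (-(α * scb + sbb) / α ^ 2) * (α * Real.cosh (α * t))
      + (-sab / (2 * α ^ 2)) * (2 * α * Real.sinh (2 * α * t))
      + ((saa + sbb) / (4 * α ^ 2)) * (2 * α * Real.cosh (2 * α * t))
      + (α - (saa - sbb) / (2 * α)) := by
    intro t
    rw [hgz t, hsum t, hC2 t, hS2 t]
    field_simp
    ring
  have zf := z_formula α z hdz _ _ _ _ _ hder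
  -- rewrite the statement's sums in terms of the atoms
  have hg1 : ∀ t, (∑ i, (α * c i + b i) * (a i * Real.cosh (α * t) - b i * Real.sinh (α * t)))
      = (α * sca + sab) * Real.cosh (α * t) + (α * scb + sbb) * (-Real.sinh (α * t)) := by
    intro t
    rw [show (α * sca + sab) = ∑ i, (α * (c i * a i) + a i * b i) by
          rw [Finset.sum_add_distrib, ← Finset.mul_sum, hsca, hsab],
        show (α * scb + sbb) = ∑ i, (α * (c i * b i) + b i ^ 2) by
          rw [Finset.sum_add_distrib, ← Finset.mul_sum, hscb, hsbb],
        ← sum_lin]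
    exact Finset.sum_congr rfl fun i _ => by ring
  have hg2 : ∀ t, (∑ i, a i * b i * Real.cosh (2 * α * t)) = sab * Real.cosh (2 * α * t) := by
    intro t
    rw [hsab, Finset.sum_mul]
  have hg3 : (∑ i, (a i ^ 2 + b i ^ 2)) = saa + sbb := by
    rw [Finset.sum_add_distrib, hsaa, hsbb]
  have hg4 : (∑ i, (a i ^ 2 - b i ^ 2)) = saa - sbb := by
    rw [Finset.sum_sub_distrib, hsaa, hsbb]
  have hg5 : (∑ i, a i * (2 * α * c i + b i)) = 2 * α * sca + sab := by
    rw [show 2 * α * sca + sab = ∑ i, (2 * α * (c i * a i) + a i * b i) by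
          rw [Finset.sum_add_distrib, ← Finset.mul_sum, hsca, hsab]]
    exact Finset.sum_congr rfl fun i _ => by ring
  intro t
  rw [zf t]
  rw [show (∑ i, (α * x i 0 + deriv (y i) 0) * (deriv (x i) 0 * Real.cosh (α * t)
        - deriv (y i) 0 * Real.sinh (α * t)))
      = ∑ i, (α * c i + b i) * (a i * Real.cosh (α * t) - b i * Real.sinh (α * t)) from rfl,
      hg1 t]
  rw [show (∑ i, deriv (x i) 0 * deriv (y i) 0 * Real.cosh (2 * α * t))
      = ∑ i, a i * b i * Real.cosh (2 * α * t) from rfl, hg2 t]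
  rw [show (∑ i, ((deriv (x i) 0) ^ 2 + (deriv (y i) 0) ^ 2))
      = ∑ i, (a i ^ 2 + b i ^ 2) from rfl, hg3]
  rw [show (∑ i, ((deriv (x i) 0) ^ 2 - (deriv (y i) 0) ^ 2))
      = ∑ i, (a i ^ 2 - b i ^ 2) from rfl, hg4]
  rw [show (∑ i, deriv (x i) 0 * (2 * α * x i 0 + deriv (y i) 0))
      = ∑ i, a i * (2 * α * c i + b i) from rfl, hg5]
  field_simp
  ring
end
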